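/- Let ε ∈ {1,−1}. The following hold for Laurent polynomials over ℂ. (1) If u has symmetry with type ε z^c and c is even, then the coset u^{[0]} has symmetry with type ε z^{c/2} and u^{[1]} has symmetry with type ε z^{c/2−1}. (2) If u has symmetry with type ε z^c and c is odd, then for every l ∈ ℤ, v₁(z) := (u^{[0]}(z) + z^l u^{[1]}(z))/√2 has symmetry with type ε z^{(c−1)/2+l} and v₂(z) := (u^{[0]}(z) − z^l u^{[1]}(z))/√2 has symmetry with type −ε z^{(c−1)/2+l}. (3) If v₁ has symmetry with type ε z^{c+1} and v₂ has symmetry with type ε z^{c}, then u(z) := v₁(z²) + z·v₂(z²) has symmetry with type ε z^{2c+2}. (4) If v₁ has symmetry with type ε z^{c} and v₂ has symmetry with type −ε z^{c}, then for every l ∈ ℤ, u(z) := w₁(z²) + z·w₂(z²), where w₁(z) := (v₁(z)+v₂(z))/√2 and w₂(z) := z^{−l}(v₁(z)−v₂(z))/√2, has symmetry with type ε z^{2(c−l)+1}. -/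

import Mathlib

open LaurentPolynomial Matrix
open scoped Classical

noncomputable section

abbrev LP := LaurentPolynomial ℂ

namespace QT

/-- The coefficient of `z^k` in a Laurent polynomial. -/
def coeff (u : LP) (k : ℤ) : ℂ := (AddMonoidAlgebra.coeff u) k

/-- The Hermitian conjugate `u⋆(z) = Σ conj(u(k)) z^{-k}`. -/
def hstar (u : LP) : LP :=
  AddMonoidAlgebra.ofCoeff (
    Finsupp.mapDomain (fun k => -k)
      (Finsupp.mapRange (starRingEnd ℂ) (map_zero _) (AddMonoidAlgebra.coeff u)))

/-- `u` has symmetry with type `ε z^c`, i.e. `u(k) = ε u(c-k)` for all `k`. -/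
def SymT (u : LP) (ε : ℂ) (c : ℤ) : Prop := ∀ k : ℤ, coeff u k = ε * coeff u (c - k)

def Sgn (ε : ℂ) : Prop := ε = 1 ∨ ε = -1

/-- `u` has symmetry (with some type). -/
def HasSym (u : LP) : Prop := ∃ ε c, Sgn ε ∧ SymT u ε c

/-- The Laurent polynomial `z - a`. -/
def zsub (a : ℂ) : LP := T 1 - LaurentPolynomial.C a

/-- `m` is the multiplicity of `z₀` as a zero of `u`. -/
def mzIs (u : LP) (z₀ : ℂ) (m : ℕ) : Prop := zsub z₀ ^ m ∣ u ∧ ¬ zsub z₀ ^ (m + 1) ∣ u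

/-- The multiplicity of `z₀` as a zero of `u`, as a function. -/
def mzF (u : LP) (z₀ : ℂ) : ℕ := sSup {m : ℕ | zsub z₀ ^ m ∣ u}

/-- The difference-of-(Hermitian)-squares property with respect to symmetry type `ε z^c`. -/
def DOS (u : LP) (ε : ℂ) (c : ℤ) : Prop :=
  ∃ (u₁ u₂ : LP) (ε₁ ε₂ : ℂ) (c₁ c₂ : ℤ),
    Sgn ε₁ ∧ Sgn ε₂ ∧ SymT u₁ ε₁ c₁ ∧ SymT u₂ ε₂ c₂ ∧
    u₁ * hstar u₁ - u₂ * hstar u₂ = u ∧ ε₁ * ε₂ = ε ∧ c₁ - c₂ = c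

/-- Degree: the largest exponent with nonzero coefficient (0 for the zero polynomial). -/
def degL (u : LP) : ℤ :=
  if h : u = 0 then 0
  else (AddMonoidAlgebra.coeff u).support.max' (Finsupp.support_nonempty_iff.mpr (fun h' => h (AddMonoidAlgebra.coeff_injective (by rw [h']; rfl))))

/-- Lower degree: the smallest exponent with nonzero coefficient (0 for zero). -/
def ldegL (u : LP) : ℤ :=
  if h : u = 0 then 0
  else (AddMonoidAlgebra.coeff u).support.min' (Finsupp.support_nonempty_iff.mpr (fun h' => h (AddMonoidAlgebra.coeff_injective (by rw [h']; rfl))))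

/-- Length `deg - ldeg`, with `len 0 = ⊥`. -/
def lenL (u : LP) : WithBot ℤ := if u = 0 then ⊥ else ((degL u - ldegL u : ℤ) : WithBot ℤ)

/-- `g` is a greatest common divisor of `a` and `b`. -/
def IsGCD2 (g a b : LP) : Prop := g ∣ a ∧ g ∣ b ∧ ∀ e : LP, e ∣ a → e ∣ b → e ∣ g

/-- `g` is a greatest common divisor of `a`, `b`, `c`, `d`. -/
def IsGCD4 (g a b c d : LP) : Prop :=
  g ∣ a ∧ g ∣ b ∧ g ∣ c ∧ g ∣ d ∧ ∀ e : LP, e ∣ a → e ∣ b → e ∣ c → e ∣ d → e ∣ g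

/-- The Hermitian conjugate transpose of a matrix of Laurent polynomials. -/
def hstarM (A : Matrix (Fin 2) (Fin 2) LP) : Matrix (Fin 2) (Fin 2) LP :=
  fun i j => hstar (A j i)

def IsHerm (A : Matrix (Fin 2) (Fin 2) LP) : Prop := hstarM A = A

/-- `diag(1, -1)`. -/
def Jmat : Matrix (Fin 2) (Fin 2) LP := Matrix.diagonal ![1, -1]

/-- A square matrix of Laurent polynomials is strongly invertible if its determinant is a
nonzero monomial. -/
def StrongInv (A : Matrix (Fin 2) (Fin 2) LP) : Prop :=
  ∃ (lam : ℂ) (k : ℤ), lam ≠ 0 ∧ A.det = LaurentPolynomial.C lam * T k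

/-- Compatible symmetry for a `2×2` matrix of Laurent polynomials. -/
def CompatSym (A : Matrix (Fin 2) (Fin 2) LP) : Prop :=
  ∃ (ε ε' : Fin 2 → ℂ) (c c' : Fin 2 → ℤ),
    (∀ j, Sgn (ε j)) ∧ (∀ k, Sgn (ε' k)) ∧
    ∀ j k, SymT (A j k) (ε j * ε' k) (c' k - c j)

/-- Substitution `z ↦ z²`. -/
def sqDom (u : LP) : LP :=
  AddMonoidAlgebra.ofCoeff (Finsupp.mapDomain (fun k => 2 * k) (AddMonoidAlgebra.coeff u))

/-- Substitution `z ↦ -z`. -/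
def negSub (u : LP) : LP :=
  (AddMonoidAlgebra.coeff u).sum fun k c => (AddMonoidAlgebra.ofCoeff (Finsupp.single k ((-1 : ℂ) ^ k * c)) : LP)

/-- The `γ`-coset `u^{[γ]}(z) = Σ_k u(γ + 2k) z^k`. -/
def cosetL (u : LP) (γ : ℤ) : LP :=
  AddMonoidAlgebra.ofCoeff (
    Finsupp.comapDomain (fun k : ℤ => γ + 2 * k) (AddMonoidAlgebra.coeff u)
      (by intro a _ b _ h; simp only at h; omega))

/-- Evaluation of a Laurent polynomial at a point. -/
def evalL (u : LP) (z : ℂ) : ℂ := (AddMonoidAlgebra.coeff u).sum fun k c => c * z ^ k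

/-- `{a; b₁, b₂}_{Θ,(1,-1)}` is a quasi-tight framelet filter bank. -/
def QTFB (a Θ b₁ b₂ : LP) : Prop :=
  sqDom Θ * hstar a * a + hstar b₁ * b₁ - hstar b₂ * b₂ = Θ ∧
  sqDom Θ * hstar a * negSub a + hstar b₁ * negSub b₁ - hstar b₂ * negSub b₂ = 0

/-- The matrix `N_{a,Θ|n_b}` built from the quotients `A`, `B`. -/
def Nmat (A B : LP) : Matrix (Fin 2) (Fin 2) LP :=
  LaurentPolynomial.C (2 : ℂ)⁻¹ •
    !![cosetL A 0 + cosetL B 0, cosetL A 1 - cosetL B 1;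
       T 1 * (cosetL A 1 + cosetL B 1), cosetL A 0 - cosetL B 0]

/-! The reflection `k ↦ c - k` preserves parity when `c` is even and swaps it when `c` is odd.
So for even `c` a symmetry of `u` restricts to each coset, while for odd `c` it exchanges the two
cosets (up to a shift); sums and differences of such an exchanged pair are then symmetric and
antisymmetric. Parts (3) and (4) run the same computation backwards, through
`u = u^{[0]}(z²) + z u^{[1]}(z²)`. -/

lemma coeff_add (u v : LP) (k : ℤ) : coeff (u + v) k = coeff u k + coeff v k :=
  rfl

lemma coeff_sub (u v : LP) (k : ℤ) : coeff (u - v) k = coeff u k - coeff v k :=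
  rfl

lemma coeff_neg (u : LP) (k : ℤ) : coeff (-u) k = -coeff u k :=
  rfl

lemma coeff_C_mul (a : ℂ) (u : LP) (k : ℤ) : coeff (C a * u) k = a * coeff u k := by
  rw [← single_eq_C, coeff, AddMonoidAlgebra.coeff_single_mul_apply, neg_zero, zero_add]
  rfl

lemma coeff_T_mul (n : ℤ) (u : LP) (k : ℤ) : coeff (T n * u) k = coeff u (k - n) := by
  rw [coeff, T, AddMonoidAlgebra.coeff_single_mul_apply, one_mul, neg_add_eq_sub]
  rfl

lemma coeff_cosetL (u : LP) (γ k : ℤ) : coeff (cosetL u γ) k = coeff u (γ + 2 * k) := by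
  rw [coeff, cosetL, AddMonoidAlgebra.coeff_ofCoeff]
  rfl

lemma coeff_sqDom_two_mul (u : LP) (k : ℤ) : coeff (sqDom u) (2 * k) = coeff u k := by
  rw [coeff, sqDom, AddMonoidAlgebra.coeff_ofCoeff]
  exact Finsupp.mapDomain_apply (mul_right_injective₀ two_ne_zero) _ k

lemma coeff_sqDom_two_mul_add_one (u : LP) (k : ℤ) : coeff (sqDom u) (2 * k + 1) = 0 := by
  rw [coeff, sqDom, AddMonoidAlgebra.coeff_ofCoeff]
  exact Finsupp.mapDomain_of_notMem_range _ _ (by rintro ⟨m, hm⟩; simp only at hm; omega)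

lemma coeff_sqDom_add_T_one_mul_sqDom_two_mul (a b : LP) (k : ℤ) :
    coeff (sqDom a + T 1 * sqDom b) (2 * k) = coeff a k := by
  rw [coeff_add, coeff_T_mul, show 2 * k - 1 = 2 * (k - 1) + 1 by ring,
    coeff_sqDom_two_mul_add_one, coeff_sqDom_two_mul, add_zero]

lemma coeff_sqDom_add_T_one_mul_sqDom_two_mul_add_one (a b : LP) (k : ℤ) :
    coeff (sqDom a + T 1 * sqDom b) (2 * k + 1) = coeff b k := by
  rw [coeff_add, coeff_T_mul, add_sub_cancel_right, coeff_sqDom_two_mul_add_one,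
    coeff_sqDom_two_mul, zero_add]

lemma symT_of_two_mul {u : LP} {ε : ℂ} {c : ℤ}
    (heven : ∀ k, coeff u (2 * k) = ε * coeff u (c - 2 * k))
    (hodd : ∀ k, coeff u (2 * k + 1) = ε * coeff u (c - (2 * k + 1))) : SymT u ε c := by
  intro k
  obtain ⟨j, rfl | rfl⟩ := Int.even_or_odd' k
  exacts [heven j, hodd j]

/-- `SymT u ε c` unfolds to `Mirror u u ε c`. -/
def Mirror (u v : LP) (ε : ℂ) (c : ℤ) : Prop := ∀ k : ℤ, coeff u k = ε * coeff v (c - k)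

namespace Mirror

variable {u v u' v' : LP} {ε : ℂ} {c : ℤ}

lemma add (h : Mirror u v ε c) (h' : Mirror u' v' ε c) : Mirror (u + u') (v + v') ε c := by
  intro k
  rw [coeff_add, coeff_add, h k, h' k, mul_add]

lemma sub (h : Mirror u v ε c) (h' : Mirror u' v' ε c) : Mirror (u - u') (v - v') ε c := by
  intro k
  rw [coeff_sub, coeff_sub, h k, h' k, mul_sub]

lemma neg_right (h : Mirror u v ε c) : Mirror u (-v) (-ε) c := by
  intro k
  rw [coeff_neg, neg_mul_neg, h k]

lemma C_mul (h : Mirror u v ε c) (a : ℂ) : Mirror (C a * u) (C a * v) ε c := by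
  intro k
  rw [coeff_C_mul, coeff_C_mul, h k, mul_left_comm]

lemma T_mul_left (h : Mirror u v ε c) (n : ℤ) : Mirror (T n * u) v ε (c + n) := by
  intro k
  rw [coeff_T_mul, h, show c + n - k = c - (k - n) by ring]

lemma T_mul_right (h : Mirror u v ε c) (n : ℤ) : Mirror u (T n * v) ε (c + n) := by
  intro k
  rw [coeff_T_mul, h, show c + n - k - n = c - k by ring]

lemma symT_add (h : Mirror u v ε c) (h' : Mirror v u ε c) : SymT (u + v) ε c := by
  have := h.add h'
  rwa [add_comm v u] at this

lemma symT_sub (h : Mirror u v ε c) (h' : Mirror v u ε c) : SymT (u - v) (-ε) c := by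
  have := (h.sub h').neg_right
  rwa [neg_sub] at this

end Mirror

lemma SymT.C_mul {u : LP} {ε : ℂ} {c : ℤ} (h : SymT u ε c) (a : ℂ) : SymT (C a * u) ε c :=
  Mirror.C_mul h a

lemma SymT.cosetL_zero {u : LP} {ε : ℂ} {d : ℤ} (h : SymT u ε (2 * d)) :
    SymT (cosetL u 0) ε d := by
  intro k
  rw [coeff_cosetL, coeff_cosetL, h, show 2 * d - (0 + 2 * k) = 0 + 2 * (d - k) by ring]

lemma SymT.cosetL_one {u : LP} {ε : ℂ} {d : ℤ} (h : SymT u ε (2 * d)) :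
    SymT (cosetL u 1) ε (d - 1) := by
  intro k
  rw [coeff_cosetL, coeff_cosetL, h, show 2 * d - (1 + 2 * k) = 1 + 2 * (d - 1 - k) by ring]

lemma SymT.mirror_cosetL_zero_one {u : LP} {ε : ℂ} {d : ℤ} (h : SymT u ε (2 * d + 1)) :
    Mirror (cosetL u 0) (cosetL u 1) ε d := by
  intro k
  rw [coeff_cosetL, coeff_cosetL, h, show 2 * d + 1 - (0 + 2 * k) = 1 + 2 * (d - k) by ring]

lemma SymT.mirror_cosetL_one_zero {u : LP} {ε : ℂ} {d : ℤ} (h : SymT u ε (2 * d + 1)) :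
    Mirror (cosetL u 1) (cosetL u 0) ε d := by
  intro k
  rw [coeff_cosetL, coeff_cosetL, h, show 2 * d + 1 - (1 + 2 * k) = 0 + 2 * (d - k) by ring]

lemma symT_sqDom_add_T_one_mul_sqDom {a b : LP} {ε : ℂ} {d : ℤ}
    (ha : SymT a ε (d + 1)) (hb : SymT b ε d) :
    SymT (sqDom a + T 1 * sqDom b) ε (2 * d + 2) := by
  apply symT_of_two_mul
  · intro k
    rw [show 2 * d + 2 - 2 * k = 2 * (d + 1 - k) by ring,
      coeff_sqDom_add_T_one_mul_sqDom_two_mul, coeff_sqDom_add_T_one_mul_sqDom_two_mul, ha]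
  · intro k
    rw [show 2 * d + 2 - (2 * k + 1) = 2 * (d - k) + 1 by ring,
      coeff_sqDom_add_T_one_mul_sqDom_two_mul_add_one,
      coeff_sqDom_add_T_one_mul_sqDom_two_mul_add_one, hb]

lemma Mirror.symT_sqDom_add_T_one_mul_sqDom {a b : LP} {ε : ℂ} {d : ℤ}
    (hab : Mirror a b ε d) (hba : Mirror b a ε d) :
    SymT (sqDom a + T 1 * sqDom b) ε (2 * d + 1) := by
  apply symT_of_two_mul
  · intro k
    rw [show 2 * d + 1 - 2 * k = 2 * (d - k) + 1 by ring,
      coeff_sqDom_add_T_one_mul_sqDom_two_mul, coeff_sqDom_add_T_one_mul_sqDom_two_mul_add_one,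
      hab]
  · intro k
    rw [show 2 * d + 1 - (2 * k + 1) = 2 * (d - k) by ring,
      coeff_sqDom_add_T_one_mul_sqDom_two_mul_add_one, coeff_sqDom_add_T_one_mul_sqDom_two_mul,
      hba]

theorem coset_symmetry_properties_general (ε : ℂ) :
    (∀ (u : LP) (c : ℤ), SymT u ε c → Even c →
      SymT (cosetL u 0) ε (c / 2) ∧ SymT (cosetL u 1) ε (c / 2 - 1)) ∧
    (∀ (u : LP) (c : ℤ), SymT u ε c → Odd c → ∀ l : ℤ,
      SymT (LaurentPolynomial.C ((Real.sqrt 2 : ℂ))⁻¹ * (cosetL u 0 + T l * cosetL u 1))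
        ε ((c - 1) / 2 + l) ∧
      SymT (LaurentPolynomial.C ((Real.sqrt 2 : ℂ))⁻¹ * (cosetL u 0 - T l * cosetL u 1))
        (-ε) ((c - 1) / 2 + l)) ∧
    (∀ (v₁ v₂ : LP) (c : ℤ), SymT v₁ ε (c + 1) → SymT v₂ ε c →
      SymT (sqDom v₁ + T 1 * sqDom v₂) ε (2 * c + 2)) ∧
    (∀ (v₁ v₂ : LP) (c : ℤ), SymT v₁ ε c → SymT v₂ (-ε) c → ∀ l : ℤ,
      SymT (sqDom (LaurentPolynomial.C ((Real.sqrt 2 : ℂ))⁻¹ * (v₁ + v₂)) +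
          T 1 * sqDom (LaurentPolynomial.C ((Real.sqrt 2 : ℂ))⁻¹ * (T (-l) * (v₁ - v₂))))
        ε (2 * (c - l) + 1)) := by
  refine ⟨?_, ?_, fun v₁ v₂ c h₁ h₂ => symT_sqDom_add_T_one_mul_sqDom h₁ h₂, ?_⟩
  · rintro u c hu ⟨d, rfl⟩
    rw [← two_mul] at hu ⊢
    rw [Int.mul_ediv_cancel_left _ two_ne_zero]
    exact ⟨hu.cosetL_zero, hu.cosetL_one⟩
  · rintro u c hu ⟨d, rfl⟩ l
    rw [add_sub_cancel_right, Int.mul_ediv_cancel_left _ two_ne_zero]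
    have h₀₁ := hu.mirror_cosetL_zero_one.T_mul_right l
    have h₁₀ := hu.mirror_cosetL_one_zero.T_mul_left l
    exact ⟨(h₀₁.symT_add h₁₀).C_mul _, (h₀₁.symT_sub h₁₀).C_mul _⟩
  · intro v₁ v₂ c (h₁ : Mirror v₁ v₁ ε c) (h₂ : Mirror v₂ v₂ (-ε) c) l
    have h₂' : Mirror v₂ (-v₂) ε c := by simpa using h₂.neg_right
    have hsum := ((h₁.add h₂').T_mul_right (-l)).C_mul ((Real.sqrt 2 : ℂ))⁻¹
    have hdiff := ((h₁.sub h₂').T_mul_left (-l)).C_mul ((Real.sqrt 2 : ℂ))⁻¹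
    rw [← sub_eq_add_neg] at hsum
    rw [sub_neg_eq_add] at hdiff
    rw [sub_eq_add_neg c l]
    exact hsum.symT_sqDom_add_T_one_mul_sqDom hdiff

/-- symmetry properties of coset sequences (Lemma 4.3 of the paper). -/
theorem coset_symmetry_properties (ε : ℂ) (hε : Sgn ε) :
    (∀ (u : LP) (c : ℤ), SymT u ε c → Even c →
      SymT (cosetL u 0) ε (c / 2) ∧ SymT (cosetL u 1) ε (c / 2 - 1)) ∧
    (∀ (u : LP) (c : ℤ), SymT u ε c → Odd c → ∀ l : ℤ,
      SymT (LaurentPolynomial.C ((Real.sqrt 2 : ℂ))⁻¹ * (cosetL u 0 + T l * cosetL u 1))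
        ε ((c - 1) / 2 + l) ∧
      SymT (LaurentPolynomial.C ((Real.sqrt 2 : ℂ))⁻¹ * (cosetL u 0 - T l * cosetL u 1))
        (-ε) ((c - 1) / 2 + l)) ∧
    (∀ (v₁ v₂ : LP) (c : ℤ), SymT v₁ ε (c + 1) → SymT v₂ ε c →
      SymT (sqDom v₁ + T 1 * sqDom v₂) ε (2 * c + 2)) ∧
    (∀ (v₁ v₂ : LP) (c : ℤ), SymT v₁ ε c → SymT v₂ (-ε) c → ∀ l : ℤ,
      SymT (sqDom (LaurentPolynomial.C ((Real.sqrt 2 : ℂ))⁻¹ * (v₁ + v₂)) +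
          T 1 * sqDom (LaurentPolynomial.C ((Real.sqrt 2 : ℂ))⁻¹ * (T (-l) * (v₁ - v₂))))
        ε (2 * (c - l) + 1)) :=
  coset_symmetry_properties_general ε

end QT
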